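/- Every semi-magic square of order 6 is equivalent, under permuting rows, permuting columns, and possibly transposing, to exactly one normalized semi-magic square: for every semi-magic square S of order 6 there exists a unique normalized semi-magic square T of order 6 such that there exist permutations σ, τ of Fin 6 with either T i j = S (σ i) (τ j) for all i, j, or T i j = S (σ j) (τ i) for all i, j. -/
import Mathlib


/-- A semi-magic square of order 6. -/
def IsSemiMagicSquare6 (S : Fin 6 → Fin 6 → ℕ) : Prop :=
  Function.Injective (fun p : Fin 6 × Fin 6 => S p.1 p.2) ∧
  (Set.range fun p : Fin 6 × Fin 6 => S p.1 p.2) = Set.Icc 1 36 ∧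
  (∀ i, ∑ j, S i j = 111) ∧
  (∀ j, ∑ i, S i j = 111)

/-- A normalized square: `S 0 0 = 1`, the first row and the first column are strictly
increasing, and `S 0 1 < S 1 0`. -/
def IsNormalized (S : Fin 6 → Fin 6 → ℕ) : Prop :=
  S 0 0 = 1 ∧
  S 0 0 < S 0 1 ∧ S 0 1 < S 0 2 ∧ S 0 2 < S 0 3 ∧ S 0 3 < S 0 4 ∧ S 0 4 < S 0 5 ∧
  S 0 0 < S 1 0 ∧ S 1 0 < S 2 0 ∧ S 2 0 < S 3 0 ∧ S 3 0 < S 4 0 ∧ S 4 0 < S 5 0 ∧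
  S 0 1 < S 1 0

lemma chain_strictMono {f : Fin 6 → ℕ} (h0 : f 0 < f 1) (h1 : f 1 < f 2) (h2 : f 2 < f 3)
    (h3 : f 3 < f 4) (h4 : f 4 < f 5) : StrictMono f := by
  intro a b hab
  fin_cases a <;> fin_cases b <;> simp_all <;> omega

lemma perm_strictMono_eq_id (e : Equiv.Perm (Fin 6)) (he : StrictMono ⇑e) : ∀ i, e i = i := by
  haveI : WellFoundedLT (Fin 6) := inferInstance
  have h1 : StrictMono (id : Fin 6 → Fin 6) := strictMono_id
  have h2 : Set.range ⇑e = Set.range (id : Fin 6 → Fin 6) := by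
    rw [Set.range_id, e.surjective.range_eq]
  have h : ⇑e = id := (StrictMono.range_inj (β := Fin 6) (γ := Fin 6) he h1).1 h2
  intro i; rw [h]; rfl

lemma semimagic_perm {S : Fin 6 → Fin 6 → ℕ} (hS : IsSemiMagicSquare6 S)
    (σ τ : Equiv.Perm (Fin 6)) : IsSemiMagicSquare6 (fun i j => S (σ i) (τ j)) := by
  obtain ⟨hinj, hrange, hrow, hcol⟩ := hS
  refine ⟨?_, ?_, ?_, ?_⟩
  · intro p q h
    have h2 := hinj (a₁ := (σ p.1, τ p.2)) (a₂ := (σ q.1, τ q.2)) h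
    exact Prod.ext (σ.injective (congrArg Prod.fst h2)) (τ.injective (congrArg Prod.snd h2))
  · rw [← hrange]
    ext x
    constructor
    · rintro ⟨p, rfl⟩; exact ⟨(σ p.1, τ p.2), rfl⟩
    · rintro ⟨p, rfl⟩; exact ⟨(σ.symm p.1, τ.symm p.2), by simp⟩
  · intro i
    rw [← hrow (σ i)]
    exact Fintype.sum_equiv τ _ _ (fun j => rfl)
  · intro j
    rw [← hcol (τ j)]
    exact Fintype.sum_equiv σ _ _ (fun i => rfl)

lemma semimagic_transpose {S : Fin 6 → Fin 6 → ℕ} (hS : IsSemiMagicSquare6 S) :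
    IsSemiMagicSquare6 (fun i j => S j i) := by
  obtain ⟨hinj, hrange, hrow, hcol⟩ := hS
  refine ⟨?_, ?_, fun i => hcol i, fun j => hrow j⟩
  · intro p q h
    have h2 := hinj (a₁ := (p.2, p.1)) (a₂ := (q.2, q.1)) h
    exact Prod.ext (congrArg Prod.snd h2) (congrArg Prod.fst h2)
  · rw [← hrange]
    ext x
    constructor
    · rintro ⟨p, rfl⟩; exact ⟨(p.2, p.1), rfl⟩
    · rintro ⟨p, rfl⟩; exact ⟨(p.2, p.1), rfl⟩

lemma normalized_unique {T T' : Fin 6 → Fin 6 → ℕ}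
    (hT : IsSemiMagicSquare6 T) (hTn : IsNormalized T) (hT'n : IsNormalized T')
    (α β : Equiv.Perm (Fin 6))
    (hrel : (∀ i j, T' i j = T (α i) (β j)) ∨ (∀ i j, T' i j = T (α j) (β i))) :
    T' = T := by
  obtain ⟨hinj, -, -, -⟩ := hT
  have hpair : ∀ a b c d, T a b = T c d → a = c ∧ b = d := by
    intro a b c d h
    have h2 := hinj (a₁ := (a, b)) (a₂ := (c, d)) h
    exact ⟨congrArg Prod.fst h2, congrArg Prod.snd h2⟩
  obtain ⟨e1, r1, r2, r3, r4, r5, c1, c2, c3, c4, c5, hlt⟩ := hTn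
  obtain ⟨e1', r1', r2', r3', r4', r5', c1', c2', c3', c4', c5', hlt'⟩ := hT'n
  have hrowm : StrictMono (fun j => T 0 j) := chain_strictMono r1 r2 r3 r4 r5
  have hcolm : StrictMono (fun i => T i 0) := chain_strictMono c1 c2 c3 c4 c5
  have hrowm' : StrictMono (fun j => T' 0 j) := chain_strictMono r1' r2' r3' r4' r5'
  have hcolm' : StrictMono (fun i => T' i 0) := chain_strictMono c1' c2' c3' c4' c5'
  rcases hrel with h | h
  · have h00 : T (α 0) (β 0) = T 0 0 := by rw [← h 0 0, e1', e1]
    obtain ⟨hα0, hβ0⟩ := hpair _ _ _ _ h00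
    have hβ : StrictMono ⇑β := by
      intro x y hxy
      have hx : T 0 (β x) < T 0 (β y) := by
        rw [← hα0, ← h 0 x, ← h 0 y]; exact hrowm' hxy
      exact hrowm.lt_iff_lt.mp hx
    have hα : StrictMono ⇑α := by
      intro x y hxy
      have hx : T (α x) 0 < T (α y) 0 := by
        rw [← hβ0, ← h x 0, ← h y 0]; exact hcolm' hxy
      exact hcolm.lt_iff_lt.mp hx
    funext i j
    rw [h i j, perm_strictMono_eq_id α hα i, perm_strictMono_eq_id β hβ j]
  · have h00 : T (α 0) (β 0) = T 0 0 := by rw [← h 0 0, e1', e1]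
    obtain ⟨hα0, hβ0⟩ := hpair _ _ _ _ h00
    have hα : StrictMono ⇑α := by
      intro x y hxy
      have hx : T (α x) 0 < T (α y) 0 := by
        rw [← hβ0, ← h 0 x, ← h 0 y]; exact hrowm' hxy
      exact hcolm.lt_iff_lt.mp hx
    have hβ : StrictMono ⇑β := by
      intro x y hxy
      have hx : T 0 (β x) < T 0 (β y) := by
        rw [← hα0, ← h x 0, ← h y 0]; exact hcolm' hxy
      exact hrowm.lt_iff_lt.mp hx
    exfalso
    have h01 : T' 0 1 = T 1 0 := by
      rw [h 0 1, perm_strictMono_eq_id α hα 1, hβ0]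
    have h10 : T' 1 0 = T 0 1 := by
      rw [h 1 0, perm_strictMono_eq_id β hβ 1, hα0]
    rw [h01, h10] at hlt'
    omega

/-- Every semi-magic square of order 6 is equivalent, under permuting rows, permuting
columns, and possibly transposing, to exactly one normalized semi-magic square. -/
theorem exists_unique_normal_form (S : Fin 6 → Fin 6 → ℕ)
    (hS : IsSemiMagicSquare6 S) :
    ∃! T : Fin 6 → Fin 6 → ℕ, IsSemiMagicSquare6 T ∧ IsNormalized T ∧
      ∃ σ τ : Equiv.Perm (Fin 6),
        (∀ i j, T i j = S (σ i) (τ j)) ∨ (∀ i j, T i j = S (σ j) (τ i)) := by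
  obtain ⟨hinj, hrange, hrow, hcol⟩ := hS
  have hpair : ∀ a b c d, S a b = S c d → a = c ∧ b = d := by
    intro a b c d h
    have h2 := hinj (a₁ := (a, b)) (a₂ := (c, d)) h
    exact ⟨congrArg Prod.fst h2, congrArg Prod.snd h2⟩
  have hge : ∀ i j, 1 ≤ S i j := by
    intro i j
    have hx : S i j ∈ Set.Icc 1 36 := by rw [← hrange]; exact ⟨(i, j), rfl⟩
    exact hx.1
  obtain ⟨⟨a, b⟩, hab⟩ : ∃ p : Fin 6 × Fin 6, S p.1 p.2 = 1 := by
    have hx : (1 : ℕ) ∈ Set.range (fun p : Fin 6 × Fin 6 => S p.1 p.2) := by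
      rw [hrange]; exact ⟨le_refl 1, by norm_num⟩
    exact hx
  have hab' : S a b = 1 := hab
  set τ : Equiv.Perm (Fin 6) := Tuple.sort (fun j => S a j) with hτdef
  set σ : Equiv.Perm (Fin 6) := Tuple.sort (fun i => S i b) with hσdef
  have hfinj : Function.Injective (fun j => S a j) := fun x y hxy => (hpair a x a y hxy).2
  have hginj : Function.Injective (fun i => S i b) := fun x y hxy => (hpair x b y b hxy).1
  have hfmono : StrictMono ((fun j => S a j) ∘ ⇑τ) :=
    (Tuple.monotone_sort _).strictMono_of_injective (hfinj.comp τ.injective)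
  have hgmono : StrictMono ((fun i => S i b) ∘ ⇑σ) :=
    (Tuple.monotone_sort _).strictMono_of_injective (hginj.comp σ.injective)
  have hτ0 : τ 0 = b := by
    apply hfinj
    have h1 : S a (τ 0) ≤ S a b := by
      have h2 := hfmono.monotone (Fin.zero_le (τ.symm b))
      simpa using h2
    have h2 : 1 ≤ S a (τ 0) := hge _ _
    show S a (τ 0) = S a b
    omega
  have hσ0 : σ 0 = a := by
    apply hginj
    have h1 : S (σ 0) b ≤ S a b := by
      have h2 := hgmono.monotone (Fin.zero_le (σ.symm a))
      simpa using h2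
    have h2 : 1 ≤ S (σ 0) b := hge _ _
    show S (σ 0) b = S a b
    omega
  set T : Fin 6 → Fin 6 → ℕ := fun i j => S (σ i) (τ j) with hTdef
  have hTsm : IsSemiMagicSquare6 T := semimagic_perm ⟨hinj, hrange, hrow, hcol⟩ σ τ
  have hT00 : T 0 0 = 1 := by rw [hTdef]; simp only [hσ0, hτ0]; exact hab
  have hrowlt : ∀ x y : Fin 6, x < y → T 0 x < T 0 y := by
    intro x y hxy
    show S (σ 0) (τ x) < S (σ 0) (τ y)
    rw [hσ0]
    exact hfmono hxy
  have hcollt : ∀ x y : Fin 6, x < y → T x 0 < T y 0 := by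
    intro x y hxy
    show S (σ x) (τ 0) < S (σ y) (τ 0)
    rw [hτ0]
    exact hgmono hxy
  have hne : T 0 1 ≠ T 1 0 := by
    intro hx
    have h2 := hpair _ _ _ _ hx
    have : (0 : Fin 6) = 1 := σ.injective h2.1
    exact absurd this (by decide)
  have hSval : ∀ u v, S u v = T (σ.symm u) (τ.symm v) := by
    intro u v
    rw [hTdef]
    simp
  by_cases hcmp : T 0 1 < T 1 0
  · have hTn : IsNormalized T :=
      ⟨hT00, hrowlt 0 1 (by decide), hrowlt 1 2 (by decide), hrowlt 2 3 (by decide),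
        hrowlt 3 4 (by decide), hrowlt 4 5 (by decide), hcollt 0 1 (by decide),
        hcollt 1 2 (by decide), hcollt 2 3 (by decide), hcollt 3 4 (by decide),
        hcollt 4 5 (by decide), hcmp⟩
    refine ⟨T, ⟨hTsm, hTn, σ, τ, Or.inl fun i j => rfl⟩, ?_⟩
    rintro T' ⟨hT'sm, hT'n, σ', τ', hrel'⟩
    rcases hrel' with h | h
    · exact normalized_unique hTsm hTn hT'n (σ'.trans σ.symm) (τ'.trans τ.symm)
        (Or.inl fun i j => by rw [h i j, hSval]; rfl)
    · exact normalized_unique hTsm hTn hT'n (σ'.trans σ.symm) (τ'.trans τ.symm)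
        (Or.inr fun i j => by rw [h i j, hSval]; rfl)
  · have hcmp' : T 1 0 < T 0 1 := by omega
    set W : Fin 6 → Fin 6 → ℕ := fun i j => T j i with hWdef
    have hWsm : IsSemiMagicSquare6 W := semimagic_transpose hTsm
    have hWn : IsNormalized W :=
      ⟨hT00, hcollt 0 1 (by decide), hcollt 1 2 (by decide), hcollt 2 3 (by decide),
        hcollt 3 4 (by decide), hcollt 4 5 (by decide), hrowlt 0 1 (by decide),
        hrowlt 1 2 (by decide), hrowlt 2 3 (by decide), hrowlt 3 4 (by decide),
        hrowlt 4 5 (by decide), hcmp'⟩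
    have hSW : ∀ u v, S u v = W (τ.symm v) (σ.symm u) := fun u v => hSval u v
    refine ⟨W, ⟨hWsm, hWn, σ, τ, Or.inr fun i j => rfl⟩, ?_⟩
    rintro T' ⟨hT'sm, hT'n, σ', τ', hrel'⟩
    rcases hrel' with h | h
    · exact normalized_unique hWsm hWn hT'n (τ'.trans τ.symm) (σ'.trans σ.symm)
        (Or.inr fun i j => by rw [h i j, hSW]; rfl)
    · exact normalized_unique hWsm hWn hT'n (τ'.trans τ.symm) (σ'.trans σ.symm)
        (Or.inl fun i j => by rw [h i j, hSW]; rfl)
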